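/- arXiv:2503.23482 — 4 statements merged into one kernel-verified Lean document; each statement's English description precedes it below -/
import Mathlib

section
/- Let Δ be a finite simplicial complex, let f : Δ → ℝ be a monotonic function, and let (Δ^t)_{t∈ℝ} be the induced filtration. If the closed interval [x, y] (with x ≤ y) contains no Stanley–Reisner critical value of f, then the Stanley–Reisner ideals at the endpoints coincide: I(Δ^y) = I(Δ^x). -/
/-- The sublevel complex `Δ^t = {σ ∈ Δ : f σ ≤ t}` of a monotonic function. -/
def sublevel {n : ℕ} (Δ : Set (Finset (Fin n))) (f : Finset (Fin n) → ℝ) (t : ℝ) :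
    Set (Finset (Fin n)) :=
  {σ | σ ∈ Δ ∧ f σ ≤ t}

/-- The Stanley–Reisner ideal of a collection `Δ` of subsets of `{1,…,n}`:
the ideal of `k[x_1,…,x_n]` generated by the squarefree monomials `∏_{i ∈ F} x_i`
for the non-faces `F ∉ Δ`. -/
noncomputable def srIdeal (k : Type*) [Field k] {n : ℕ} (Δ : Set (Finset (Fin n))) :
    Ideal (MvPolynomial (Fin n) k) :=
  Ideal.span
    ((fun F : Finset (Fin n) => ∏ i ∈ F, (MvPolynomial.X i : MvPolynomial (Fin n) k)) ''
      {F | F ∉ Δ})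

/-- `r` is a Stanley–Reisner critical value of `f`: for all sufficiently small `ε > 0`
there is a strict inclusion `I(Δ^{r+ε}) ⊊ I(Δ^{r−ε})`. -/
def IsSRCriticalValue (k : Type*) [Field k] {n : ℕ} (Δ : Set (Finset (Fin n)))
    (f : Finset (Fin n) → ℝ) (r : ℝ) : Prop :=
  ∃ ε₀ > (0 : ℝ), ∀ ε : ℝ, 0 < ε → ε < ε₀ →
    srIdeal k (sublevel Δ f (r + ε)) < srIdeal k (sublevel Δ f (r - ε))

lemma srIdeal_antitone (k : Type*) [Field k] {n : ℕ} {Δ₁ Δ₂ : Set (Finset (Fin n))}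
    (h : Δ₁ ⊆ Δ₂) : srIdeal k Δ₂ ≤ srIdeal k Δ₁ := by
  apply Ideal.span_mono
  apply Set.image_mono
  intro F hF hF1
  exact hF (h hF1)

/-- **Critical Value Lemma.** If the closed interval `[x, y]` contains no
Stanley–Reisner critical value of `f`, then `I(Δ^y) = I(Δ^x)`. -/
theorem srIdeal_sublevel_eq_of_no_critical_value (k : Type*) [Field k] {n : ℕ}
    (Δ : Set (Finset (Fin n))) (hfin : Δ.Finite)
    (hdown : ∀ F ∈ Δ, ∀ G : Finset (Fin n), G ⊆ F → G ∈ Δ)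
    (hempty : (∅ : Finset (Fin n)) ∈ Δ)
    (f : Finset (Fin n) → ℝ)
    (hmono : ∀ τ ∈ Δ, ∀ σ ∈ Δ, τ ⊆ σ → f τ ≤ f σ)
    (x y : ℝ) (hxy : x ≤ y)
    (hnc : ∀ r ∈ Set.Icc x y, ¬ IsSRCriticalValue k Δ f r) :
    srIdeal k (sublevel Δ f y) = srIdeal k (sublevel Δ f x) := by
  classical
  -- the finite set of values of `f` on `Δ`
  set W : Finset ℝ := (hfin.image f).toFinset with hW
  have hmemW : ∀ σ ∈ Δ, f σ ∈ W := by
    intro σ hσ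
    simp [hW, Set.Finite.mem_toFinset]
    exact ⟨σ, hσ, rfl⟩
  -- the key induction
  have key : ∀ m : ℕ, ∀ t : ℝ, x ≤ t → t ≤ y →
      (W.filter (fun v => x < v ∧ v ≤ t)).card ≤ m →
      srIdeal k (sublevel Δ f t) = srIdeal k (sublevel Δ f x) := by
    intro m
    induction m with
    | zero =>
      intro t hxt hty hcard
      have hempty' : W.filter (fun v => x < v ∧ v ≤ t) = ∅ :=
        Finset.card_eq_zero.mp (Nat.le_zero.mp hcard)
      have : sublevel Δ f t = sublevel Δ f x := by
        ext σ
        constructor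
        · rintro ⟨hσ, hft⟩
          refine ⟨hσ, ?_⟩
          by_contra hgt
          push_neg at hgt
          have : f σ ∈ W.filter (fun v => x < v ∧ v ≤ t) :=
            Finset.mem_filter.mpr ⟨hmemW σ hσ, hgt, hft⟩
          simp [hempty'] at this
        · rintro ⟨hσ, hfx⟩
          exact ⟨hσ, hfx.trans hxt⟩
      rw [this]
    | succ m ih =>
      intro t hxt hty hcard
      by_cases hne : (W.filter (fun v => x < v ∧ v ≤ t)).Nonempty
      · set S := W.filter (fun v => x < v ∧ v ≤ t) with hS
        set r := S.max' hne with hr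
        have hrmem : r ∈ S := S.max'_mem hne
        obtain ⟨hrW, hxr, hrt⟩ := Finset.mem_filter.mp hrmem
        -- the gap size
        set D : Finset ℝ := insert (r - x) ((W.erase r).image fun w => |w - r|) with hD
        have hDne : D.Nonempty := ⟨r - x, Finset.mem_insert_self _ _⟩
        set ε₀ := D.min' hDne with hε₀
        have hDpos : ∀ d ∈ D, 0 < d := by
          intro d hd
          rcases Finset.mem_insert.mp hd with h | h
          · subst h; linarith
          · obtain ⟨w, hw, rfl⟩ := Finset.mem_image.mp h
            have hwne : w ≠ r := (Finset.mem_erase.mp hw).1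
            exact abs_pos.mpr (sub_ne_zero.mpr hwne)
        have hε₀pos : 0 < ε₀ := hDpos _ (D.min'_mem hDne)
        have hε₀x : ε₀ ≤ r - x := D.min'_le _ (Finset.mem_insert_self _ _)
        -- non-criticality at r
        have hr_nc := hnc r ⟨hxr.le, hrt.trans hty⟩
        rw [IsSRCriticalValue] at hr_nc
        push_neg at hr_nc
        obtain ⟨ε, hεpos, hεlt, hnotlt⟩ := hr_nc ε₀ hε₀pos
        -- extract the equality of ideals around r, then clear the ideal hypothesis
        have hstep : r - ε ≤ r + ε :=
          (sub_le_self r hεpos.le).trans (le_add_of_nonneg_right hεpos.le)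
        have hle : srIdeal k (sublevel Δ f (r + ε)) ≤ srIdeal k (sublevel Δ f (r - ε)) := by
          apply srIdeal_antitone
          rintro σ ⟨hσ, hfr⟩
          exact ⟨hσ, hfr.trans hstep⟩
        have heq : srIdeal k (sublevel Δ f (r + ε)) = srIdeal k (sublevel Δ f (r - ε)) :=
          hle.lt_or_eq.resolve_left hnotlt
        clear hnotlt hle
        have hxre : x < r - ε := by linarith
        -- sublevel at t equals sublevel at r
        have ht_r : sublevel Δ f t = sublevel Δ f r := by
          ext σ
          constructor
          · rintro ⟨hσ, hft⟩
            refine ⟨hσ, ?_⟩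
            by_contra hgt
            push_neg at hgt
            have : f σ ∈ S := Finset.mem_filter.mpr ⟨hmemW σ hσ, hxr.trans hgt, hft⟩
            exact absurd (S.le_max' _ this) (not_le.mpr hgt)
          · rintro ⟨hσ, hfr⟩
            exact ⟨hσ, hfr.trans hrt⟩
        -- sublevel at r + ε equals sublevel at r
        have hrε_r : sublevel Δ f (r + ε) = sublevel Δ f r := by
          ext σ
          constructor
          · rintro ⟨hσ, hft⟩
            refine ⟨hσ, ?_⟩
            by_contra hgt
            push_neg at hgt
            have hne' : f σ ≠ r := ne_of_gt hgt
            have hmem : |f σ - r| ∈ D := by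
              apply Finset.mem_insert_of_mem
              exact Finset.mem_image.mpr ⟨f σ, Finset.mem_erase.mpr ⟨hne', hmemW σ hσ⟩, rfl⟩
            have h1 : ε₀ ≤ |f σ - r| := D.min'_le _ hmem
            have h2 : |f σ - r| = f σ - r := abs_of_pos (by linarith)
            linarith
          · rintro ⟨hσ, hfr⟩
            exact ⟨hσ, by linarith⟩
        -- induction hypothesis at r - ε
        have hsub : W.filter (fun v => x < v ∧ v ≤ r - ε) ⊆ S.erase r := by
          intro v hv
          obtain ⟨hvW, hxv, hvre⟩ := Finset.mem_filter.mp hv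
          refine Finset.mem_erase.mpr ⟨?_, Finset.mem_filter.mpr ⟨hvW, hxv, by linarith⟩⟩
          intro h; subst h; linarith
        have hcard' : (W.filter (fun v => x < v ∧ v ≤ r - ε)).card ≤ m := by
          have h1 := Finset.card_le_card hsub
          have h2 : (S.erase r).card = S.card - 1 := Finset.card_erase_of_mem hrmem
          have h3 : 1 ≤ S.card := Finset.card_pos.mpr hne
          omega
        have hih := ih (r - ε) hxre.le (by linarith) hcard'
        calc srIdeal k (sublevel Δ f t) = srIdeal k (sublevel Δ f r) := by rw [ht_r]
          _ = srIdeal k (sublevel Δ f (r + ε)) := by rw [hrε_r]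
          _ = srIdeal k (sublevel Δ f (r - ε)) := heq
          _ = srIdeal k (sublevel Δ f x) := hih
      · -- no values in (x, t]: same as base case
        have hempty' : W.filter (fun v => x < v ∧ v ≤ t) = ∅ :=
          Finset.not_nonempty_iff_eq_empty.mp hne
        have : sublevel Δ f t = sublevel Δ f x := by
          ext σ
          constructor
          · rintro ⟨hσ, hft⟩
            refine ⟨hσ, ?_⟩
            by_contra hgt
            push_neg at hgt
            have : f σ ∈ W.filter (fun v => x < v ∧ v ≤ t) :=
              Finset.mem_filter.mpr ⟨hmemW σ hσ, hgt, hft⟩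
            simp [hempty'] at this
          · rintro ⟨hσ, hfx⟩
            exact ⟨hσ, hfx.trans hxt⟩
        rw [this]
  exact key (W.filter (fun v => x < v ∧ v ≤ y)).card y hxy le_rfl le_rfl
end

section
/- Let k be a field, Δ a finite simplicial complex, and f : Δ → ℝ monotonic with induced filtration (Δ^t)_{t∈ℝ}. For each face σ ∈ Δ set b_σ = f(σ) and let d_σ = min{ f(τ) : τ ∈ Δ, σ ⊊ τ } if σ has a proper coface in Δ, and d_σ = +∞ otherwise. Then the facet persistence module V^f of the filtration is isomorphic, compatibly with all structure maps, to the direct sum over σ ∈ Δ of the interval modules k[b_σ, d_σ): for every t ∈ ℝ there is a k-linear isomorphism η_t from V^f_t onto the direct sum ⊕_{σ ∈ Δ, b_σ ≤ t < d_σ} k, and for all s ≤ t the isomorphisms intertwine the structure map v_s^t of V^f with the map on direct sums that is the identity on each summand indexed by a σ with b_σ ≤ s and t < d_σ and zero on all other summands. In particular, σ is a facet of Δ^t if and only if t ∈ [b_σ, d_σ). -/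
/-- `σ` is a facet of `Γ`: a face that is maximal under inclusion. -/
def IsFacet {n : ℕ} (Γ : Set (Finset (Fin n))) (σ : Finset (Fin n)) : Prop :=
  σ ∈ Γ ∧ ∀ τ ∈ Γ, σ ⊆ τ → σ = τ

/-- The `k`-vector space with basis the facets of `Γ`. -/
abbrev FacetSpace (k : Type*) [Field k] {n : ℕ} (Γ : Set (Finset (Fin n))) :=
  {σ : Finset (Fin n) // IsFacet Γ σ} →₀ k

open Classical in
/-- The structure map of the facet persistence module: the basis vector of a facet `σ`
of `Γ₁` is sent to the same basis vector if `σ` is a facet of `Γ₂`, and to `0` otherwise. -/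
noncomputable def structMap (k : Type*) [Field k] {n : ℕ}
    (Γ₁ Γ₂ : Set (Finset (Fin n))) :
    FacetSpace k Γ₁ →ₗ[k] FacetSpace k Γ₂ :=
  Finsupp.lsum k fun σ =>
    if h : IsFacet Γ₂ σ.1 then Finsupp.lsingle ⟨σ.1, h⟩ else 0

/-- The death index `d_σ` of the face `σ`: the minimum of `f` over the proper cofaces of
`σ` in `Δ` when `σ` has a proper coface, and `+∞` otherwise (the empty infimum in `EReal`). -/
noncomputable def deathIdx {n : ℕ} (Δ : Set (Finset (Fin n))) (f : Finset (Fin n) → ℝ)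
    (σ : Finset (Fin n)) : EReal :=
  ⨅ τ ∈ {τ | τ ∈ Δ ∧ σ ⊂ τ}, (f τ : EReal)

/-- The face `σ` contributes to the interval module `k[b_σ, d_σ)` at time `t`,
i.e. `b_σ = f σ ≤ t < d_σ`. -/
def aliveAt {n : ℕ} (Δ : Set (Finset (Fin n))) (f : Finset (Fin n) → ℝ)
    (t : ℝ) (σ : Finset (Fin n)) : Prop :=
  σ ∈ Δ ∧ (f σ : EReal) ≤ (t : EReal) ∧ (t : EReal) < deathIdx Δ f σ

/-- The value at time `t` of the direct sum `⊕_{σ ∈ Δ} k[b_σ, d_σ)` of interval modules: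
the direct sum of one copy of `k` for each face `σ ∈ Δ` with `b_σ ≤ t < d_σ`. -/
abbrev IntervalSum (k : Type*) [Field k] {n : ℕ} (Δ : Set (Finset (Fin n)))
    (f : Finset (Fin n) → ℝ) (t : ℝ) :=
  {σ : Finset (Fin n) // aliveAt Δ f t σ} →₀ k

open Classical in
/-- The structure map at times `s ≤ t` of the direct sum of interval modules: the identity on
each summand indexed by a `σ` that is still alive at time `t`, and zero on all other summands. -/
noncomputable def intervalMap (k : Type*) [Field k] {n : ℕ} (Δ : Set (Finset (Fin n)))
    (f : Finset (Fin n) → ℝ) (s t : ℝ) :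
    IntervalSum k Δ f s →ₗ[k] IntervalSum k Δ f t :=
  Finsupp.lsum k fun σ =>
    if h : aliveAt Δ f t σ.1 then Finsupp.lsingle ⟨σ.1, h⟩ else 0

lemma facet_iff_alive {n : ℕ} (Δ : Set (Finset (Fin n))) (f : Finset (Fin n) → ℝ)
    (t : ℝ) (σ : Finset (Fin n)) :
    IsFacet (sublevel Δ f t) σ ↔ aliveAt Δ f t σ := by
  constructor
  · rintro ⟨⟨hσΔ, hft⟩, hmax⟩
    have hle : (f σ : EReal) ≤ (t : EReal) := by exact_mod_cast hft
    refine ⟨hσΔ, hle, ?_⟩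
    have hall : ∀ τ ∈ Δ, σ ⊂ τ → t < f τ := by
      intro τ hτ hss
      by_contra h
      push_neg at h
      exact hss.ne (hmax τ ⟨hτ, h⟩ hss.subset)
    rw [deathIdx]
    by_cases hne : ({τ | τ ∈ Δ ∧ σ ⊂ τ}).Nonempty
    · have hfin : ({τ | τ ∈ Δ ∧ σ ⊂ τ}).Finite := Set.toFinite _
      obtain ⟨τ₀, hτ₀, hmin⟩ := Set.exists_min_image _ f hfin hne
      calc (t : EReal) < (f τ₀ : EReal) := by exact_mod_cast hall τ₀ hτ₀.1 hτ₀.2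
        _ ≤ _ := le_iInf₂ fun τ hτ => by exact_mod_cast hmin τ hτ
    · rw [Set.not_nonempty_iff_eq_empty] at hne
      simp [hne]
  · rintro ⟨hσΔ, hft, hd⟩
    have hle : f σ ≤ t := by exact_mod_cast hft
    refine ⟨⟨hσΔ, hle⟩, ?_⟩
    rintro τ ⟨hτΔ, hτt⟩ hsub
    by_contra hne
    have hss : σ ⊂ τ := hsub.ssubset_of_ne hne
    have h1 : deathIdx Δ f σ ≤ (f τ : EReal) := iInf₂_le τ ⟨hτΔ, hss⟩
    have h2 : (t : EReal) < (f τ : EReal) := lt_of_lt_of_le hd h1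
    have h3 : t < f τ := by exact_mod_cast h2
    exact absurd hτt h3.not_ge

/-- **Decomposition of facet persistence modules.** The facet persistence module of the
sublevel filtration of a monotonic function `f` on a finite simplicial complex `Δ` is
isomorphic, compatibly with all structure maps, to the direct sum over `σ ∈ Δ` of the
interval modules `k[b_σ, d_σ)`, where `b_σ = f σ` and `d_σ` is the minimum of `f` over the
proper cofaces of `σ` (`+∞` if there are none).  In particular, `σ` is a facet of `Δ^t`
if and only if `t ∈ [b_σ, d_σ)`. -/
theorem facet_persistence_module_decomposition (k : Type*) [Field k] {n : ℕ}
    (Δ : Set (Finset (Fin n))) (hfin : Δ.Finite)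
    (hdown : ∀ F ∈ Δ, ∀ G : Finset (Fin n), G ⊆ F → G ∈ Δ)
    (hempty : (∅ : Finset (Fin n)) ∈ Δ)
    (f : Finset (Fin n) → ℝ)
    (hmono : ∀ τ ∈ Δ, ∀ σ ∈ Δ, τ ⊆ σ → f τ ≤ f σ) :
    (∃ η : (t : ℝ) → (FacetSpace k (sublevel Δ f t) ≃ₗ[k] IntervalSum k Δ f t),
      ∀ s t : ℝ, s ≤ t → ∀ v : FacetSpace k (sublevel Δ f s),
        η t (structMap k (sublevel Δ f s) (sublevel Δ f t) v)
          = intervalMap k Δ f s t (η s v)) ∧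
    ∀ σ ∈ Δ, ∀ t : ℝ, IsFacet (sublevel Δ f t) σ ↔ aliveAt Δ f t σ := by
  classical
  refine ⟨⟨fun t => Finsupp.domLCongr (Equiv.subtypeEquivRight (facet_iff_alive Δ f t)), ?_⟩,
    fun σ _ t => facet_iff_alive Δ f t σ⟩
  intro s t _ v
  induction v using Finsupp.induction_linear with
  | zero => simp
  | add u w hu hw => simp [map_add, hu, hw]
  | single σ c =>
    simp only [structMap, intervalMap, Finsupp.lsum_single, Finsupp.domLCongr_single,
      Equiv.subtypeEquivRight_apply_coe]
    rcases σ with ⟨σ, hσ⟩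
    by_cases h : IsFacet (sublevel Δ f t) σ
    · rw [dif_pos h, dif_pos ((facet_iff_alive Δ f t σ).mp h)]
      simp only [Finsupp.lsingle_apply, Finsupp.domLCongr_single]
      rfl
    · rw [dif_neg h, dif_neg (fun ha => h ((facet_iff_alive Δ f t σ).mpr ha))]
      simp
end

section
/- Let k be a field, Δ a simplicial complex, and f, g : Δ → ℝ monotonic functions with |f(σ) − g(σ)| ≤ δ for all σ ∈ Δ, where δ ≥ 0. For each t ∈ ℝ define φ_t : V^f_t → V^g_{t+δ} as the linear map sending the basis vector of a facet σ of Δ^t_f to the same basis vector if σ is a facet of Δ^{t+δ}_g, and to 0 otherwise; define ψ_t : V^g_t → V^f_{t+δ} symmetrically. Then for all s ≤ t the interleaving square commutes: φ_t ∘ v^f_{s,t} = v^g_{s+δ,t+δ} ∘ φ_s, and likewise ψ_t ∘ v^g_{s,t} = v^f_{s+δ,t+δ} ∘ ψ_s. -/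
lemma IsFacet.of_subset {n : ℕ} {Γ Γ' : Set (Finset (Fin n))} {σ : Finset (Fin n)}
    (hσ : IsFacet Γ' σ) (hmem : σ ∈ Γ) (hsub : Γ ⊆ Γ') : IsFacet Γ σ :=
  ⟨hmem, fun τ hτ hστ => hσ.2 τ (hsub hτ) hστ⟩

lemma sublevel_mono {n : ℕ} (Δ : Set (Finset (Fin n))) (f : Finset (Fin n) → ℝ)
    {s t : ℝ} (hst : s ≤ t) : sublevel Δ f s ⊆ sublevel Δ f t :=
  fun _ ⟨hσ, hfs⟩ => ⟨hσ, hfs.trans hst⟩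

lemma sublevel_subset_sublevel_add {n : ℕ} {Δ : Set (Finset (Fin n))}
    {f g : Finset (Fin n) → ℝ} {δ : ℝ} (hgf : ∀ σ ∈ Δ, g σ ≤ f σ + δ) (t : ℝ) :
    sublevel Δ f t ⊆ sublevel Δ g (t + δ) :=
  fun σ ⟨hσ, hft⟩ => ⟨hσ, (hgf σ hσ).trans (by linarith)⟩

open Classical in
lemma structMap_single (k : Type*) [Field k] {n : ℕ}
    (Γ₁ Γ₂ : Set (Finset (Fin n))) (σ : {σ : Finset (Fin n) // IsFacet Γ₁ σ}) (a : k) :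
    structMap k Γ₁ Γ₂ (Finsupp.single σ a)
      = if h : IsFacet Γ₂ σ.1 then Finsupp.single ⟨σ.1, h⟩ a else 0 := by
  simp only [structMap, Finsupp.lsum_single]
  split <;> simp

/-- A facet of `Γ₃` lying in `Γ₁ ⊆ Γ₂` is also a facet of `Γ₂`, so it is never killed at the
middle step. -/
lemma structMap_comp_of_subset (k : Type*) [Field k] {n : ℕ}
    {Γ₁ Γ₂ Γ₃ : Set (Finset (Fin n))} (h₁₂ : Γ₁ ⊆ Γ₂) (h₂₃ : Γ₂ ⊆ Γ₃) :
    (structMap k Γ₂ Γ₃).comp (structMap k Γ₁ Γ₂) = structMap k Γ₁ Γ₃ := by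
  refine Finsupp.lhom_ext fun σ a => ?_
  by_cases h₃ : IsFacet Γ₃ σ.1
  · have h₂ : IsFacet Γ₂ σ.1 := h₃.of_subset (h₁₂ σ.2.1) h₂₃
    simp [structMap_single, h₂, h₃]
  · by_cases h₂ : IsFacet Γ₂ σ.1 <;> simp [structMap_single, h₂, h₃]

theorem interleaving_squares_commute_general (k : Type*) [Field k] (n : ℕ)
    (Δ : Set (Finset (Fin n)))
    (f g : Finset (Fin n) → ℝ)
    (δ : ℝ)
    (hfg : ∀ σ ∈ Δ, |f σ - g σ| ≤ δ)
    (s t : ℝ) (hst : s ≤ t) :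
    ((structMap k (sublevel Δ f t) (sublevel Δ g (t + δ))).comp
        (structMap k (sublevel Δ f s) (sublevel Δ f t))
      = (structMap k (sublevel Δ g (s + δ)) (sublevel Δ g (t + δ))).comp
          (structMap k (sublevel Δ f s) (sublevel Δ g (s + δ)))) ∧
    ((structMap k (sublevel Δ g t) (sublevel Δ f (t + δ))).comp
        (structMap k (sublevel Δ g s) (sublevel Δ g t))
      = (structMap k (sublevel Δ f (s + δ)) (sublevel Δ f (t + δ))).comp
          (structMap k (sublevel Δ g s) (sublevel Δ f (s + δ)))) := by
  have hgf : ∀ σ ∈ Δ, g σ ≤ f σ + δ := fun σ hσ => by linarith [(abs_le.mp (hfg σ hσ)).1]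
  have hfg' : ∀ σ ∈ Δ, f σ ≤ g σ + δ := fun σ hσ => by linarith [(abs_le.mp (hfg σ hσ)).2]
  have hstδ : s + δ ≤ t + δ := by linarith
  constructor
  · rw [structMap_comp_of_subset k (sublevel_mono Δ f hst) (sublevel_subset_sublevel_add hgf t),
      structMap_comp_of_subset k (sublevel_subset_sublevel_add hgf s) (sublevel_mono Δ g hstδ)]
  · rw [structMap_comp_of_subset k (sublevel_mono Δ g hst) (sublevel_subset_sublevel_add hfg' t),
      structMap_comp_of_subset k (sublevel_subset_sublevel_add hfg' s) (sublevel_mono Δ f hstδ)]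

/-- **Interleaving squares commute.** For monotonic `f, g` with `|f − g| ≤ δ` on `Δ` and
`s ≤ t`, one has `φ_t ∘ v^f_{s,t} = v^g_{s+δ,t+δ} ∘ φ_s` and
`ψ_t ∘ v^g_{s,t} = v^f_{s+δ,t+δ} ∘ ψ_s`. -/
theorem interleaving_squares_commute (k : Type*) [Field k] (n : ℕ)
    (Δ : Set (Finset (Fin n)))
    (hdown : ∀ F ∈ Δ, ∀ G : Finset (Fin n), G ⊆ F → G ∈ Δ)
    (hempty : (∅ : Finset (Fin n)) ∈ Δ)
    (f g : Finset (Fin n) → ℝ)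
    (hmonof : ∀ τ ∈ Δ, ∀ σ ∈ Δ, τ ⊆ σ → f τ ≤ f σ)
    (hmonog : ∀ τ ∈ Δ, ∀ σ ∈ Δ, τ ⊆ σ → g τ ≤ g σ)
    (δ : ℝ) (hδ : 0 ≤ δ)
    (hfg : ∀ σ ∈ Δ, |f σ - g σ| ≤ δ)
    (s t : ℝ) (hst : s ≤ t) :
    ((structMap k (sublevel Δ f t) (sublevel Δ g (t + δ))).comp
        (structMap k (sublevel Δ f s) (sublevel Δ f t))
      = (structMap k (sublevel Δ g (s + δ)) (sublevel Δ g (t + δ))).comp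
          (structMap k (sublevel Δ f s) (sublevel Δ g (s + δ)))) ∧
    ((structMap k (sublevel Δ g t) (sublevel Δ f (t + δ))).comp
        (structMap k (sublevel Δ g s) (sublevel Δ g t))
      = (structMap k (sublevel Δ f (s + δ)) (sublevel Δ f (t + δ))).comp
          (structMap k (sublevel Δ g s) (sublevel Δ f (s + δ)))) :=
  interleaving_squares_commute_general k n Δ f g δ hfg s t hst
end

section
/- Let k be a field and Δ a simplicial complex on the vertex set {x_1,…,x_n}. Then the Stanley–Reisner ideal factors as the intersection of the facet prime monomial ideals: I(Δ) = ⋂_{σ ∈ F(Δ)} P_σ, where F(Δ) is the set of facets of Δ and P_σ = ⟨ x_i : i ∉ σ ⟩. -/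
/-- The prime monomial ideal `P_A = ⟨ x_i : i ∉ A ⟩`. -/
noncomputable def primeMonomialIdeal (k : Type*) [Field k] {n : ℕ} (A : Finset (Fin n)) :
    Ideal (MvPolynomial (Fin n) k) :=
  Ideal.span ((MvPolynomial.X : Fin n → MvPolynomial (Fin n) k) '' {i | i ∉ A})

open MvPolynomial in
lemma prod_X_eq_monomial' {k : Type*} [Field k] {n : ℕ} (F : Finset (Fin n)) :
    (∏ i ∈ F, (X i : MvPolynomial (Fin n) k)) =
      monomial (∑ i ∈ F, Finsupp.single i 1) 1 := by
  classical
  induction F using Finset.induction with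
  | empty => simp
  | insert a s h ih =>
    rw [Finset.prod_insert h, Finset.sum_insert h, ih, monomial_single_add, pow_one]

lemma sum_single_apply' {n : ℕ} (F : Finset (Fin n)) (i : Fin n) :
    (∑ j ∈ F, Finsupp.single j (1 : ℕ)) i = if i ∈ F then 1 else 0 := by
  classical
  rw [Finsupp.finset_sum_apply]
  simp [Finsupp.single_apply, Finset.sum_ite_eq' F i (fun _ => 1)]

open MvPolynomial in
/-- The Stanley–Reisner ideal factors as the intersection of the facet prime monomial
ideals: `I(Δ) = ⋂_{σ ∈ F(Δ)} P_σ`. -/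
theorem srIdeal_eq_iInf_facet_primes (k : Type*) [Field k] (n : ℕ)
    (Δ : Set (Finset (Fin n)))
    (hdown : ∀ F ∈ Δ, ∀ G : Finset (Fin n), G ⊆ F → G ∈ Δ)
    (hempty : (∅ : Finset (Fin n)) ∈ Δ) :
    srIdeal k Δ = ⨅ σ ∈ {σ | IsFacet Δ σ}, primeMonomialIdeal k σ := by
  classical
  ext p
  have hsr : srIdeal k Δ = Ideal.span ((fun s => monomial s (1 : k)) ''
      ((fun F : Finset (Fin n) => ∑ i ∈ F, Finsupp.single i 1) '' {F | F ∉ Δ})) := by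
    rw [srIdeal, Set.image_image]
    simp only [prod_X_eq_monomial']
  rw [hsr, mem_ideal_span_monomial_image]
  simp only [Ideal.mem_iInf, Set.mem_setOf_eq]
  constructor
  · intro h σ hσ
    rw [primeMonomialIdeal, mem_ideal_span_X_image]
    intro m hm
    obtain ⟨d, ⟨F, hF, rfl⟩, hd⟩ := h m hm
    by_contra hc
    push_neg at hc
    simp only [Set.mem_setOf_eq] at hc
    apply hF
    apply hdown σ hσ.1
    intro i hiF
    by_contra hiσ
    have h0 := hc i hiσ
    have h1 : (∑ j ∈ F, Finsupp.single j (1 : ℕ)) i ≤ m i := hd i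
    rw [sum_single_apply', if_pos hiF, h0] at h1
    omega
  · intro h m hm
    refine ⟨∑ i ∈ m.support, Finsupp.single i 1, ⟨m.support, ?_, rfl⟩, ?_⟩
    · -- `m.support ∉ Δ`
      intro hmem
      set S : Set (Finset (Fin n)) := {τ | τ ∈ Δ ∧ m.support ⊆ τ} with hS
      obtain ⟨σ, hσS, hmax⟩ := Set.Finite.exists_maximalFor Finset.card S
        (Set.toFinite S) ⟨m.support, hmem, subset_rfl⟩
      have hfac : IsFacet Δ σ := by
        refine ⟨hσS.1, fun τ hτ hsub => ?_⟩
        have hτS : τ ∈ S := ⟨hτ, hσS.2.trans hsub⟩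
        exact Finset.eq_of_subset_of_card_le hsub
          (hmax hτS (Finset.card_le_card hsub))
      have := h σ hfac
      rw [primeMonomialIdeal, mem_ideal_span_X_image] at this
      obtain ⟨i, hiσ, hi⟩ := this m hm
      exact hiσ (hσS.2 (Finsupp.mem_support_iff.2 hi))
    · intro i
      rw [sum_single_apply']
      by_cases hi : i ∈ m.support
      · rw [if_pos hi]
        exact Nat.one_le_iff_ne_zero.2 (Finsupp.mem_support_iff.1 hi)
      · simp [hi]
end
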